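/- (Necessity of silence for message optimality) Suppose an AC protocol for γ^f with f < n − 1 has a nice run r in which, for every pair of distinct processes j and i, there is a message chain from j to i (i.e., no knowledge is gained via silence). Then at least 2n − 2 > n + f − 1 messages are sent in r; hence any AC protocol achieving n + f − 1 messages in nice runs must have some process learn some initial value without a message chain. -/

import Mathlib

/-
Order the messages by a key that refines the order of sending times, and let `a` be the first
process to have heard (through message chains) from everybody. Before that moment every other
process has sent a message, namely the first message of its chain to `a`; after it every other
process still receives a message, namely the last message of the chains that complete its
knowledge, which is strictly later than `a`'s. This gives `n - 1` messages on each side.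
-/

open scoped Classical

/-- Message chain from `i` to `i'` in the run `M`. -/
def MsgChain {P : Type*} (M : Finset (P × P × ℕ)) (i i' : P) : Prop :=
  i = i' ∨ ∃ (ℓ : ℕ) (j : Fin (ℓ + 1) → P) (t : Fin ℓ → ℕ),
    0 < ℓ ∧ j 0 = i ∧ j (Fin.last ℓ) = i' ∧ StrictMono t ∧
    ∀ k : Fin ℓ, (j k.castSucc, j k.succ, t k) ∈ M

lemma exists_injective_key_strictMono_time (P : Type*) [Finite P] :
    ∃ key : P × P × ℕ → ℕ, Function.Injective key ∧
      ∀ m m' : P × P × ℕ, m.2.2 < m'.2.2 → key m < key m' := by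
  obtain ⟨n, ⟨e⟩⟩ := Finite.exists_equiv_fin (P × P)
  have hlt : ∀ m m' : P × P × ℕ, m.2.2 < m'.2.2 →
      m.2.2 * n + e (m.1, m.2.1) < m'.2.2 * n + e (m'.1, m'.2.1) := by
    intro m m' h
    have := (e (m.1, m.2.1)).isLt
    nlinarith
  refine ⟨fun m => m.2.2 * n + e (m.1, m.2.1), fun m m' h => ?_, hlt⟩
  obtain ht | ht | ht := lt_trichotomy m.2.2 m'.2.2
  · exact absurd h (hlt m m' ht).ne
  · have he : e (m.1, m.2.1) = e (m'.1, m'.2.1) := Fin.ext (by simp_all)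
    have := e.injective he
    ext <;> simp_all
  · exact absurd h (hlt m' m ht).ne'

namespace MsgChain

variable {P : Type*} {M M' : Finset (P × P × ℕ)} {i i' : P}

lemma mono (h : M ⊆ M') (hc : MsgChain M i i') : MsgChain M' i i' := by
  rcases hc with h' | ⟨ℓ, j, t, hℓ, h0, hl, hs, hm⟩
  · exact Or.inl h'
  · exact Or.inr ⟨ℓ, j, t, hℓ, h0, hl, hs, fun k => h (hm k)⟩

lemma exists_mem_fst_eq (hc : MsgChain M i i') (hne : i ≠ i') : ∃ m ∈ M, m.1 = i := by
  rcases hc with h' | ⟨ℓ, j, t, hℓ, h0, -, -, hm⟩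
  · exact absurd h' hne
  · obtain ⟨ℓ, rfl⟩ := Nat.exists_eq_succ_of_ne_zero hℓ.ne'
    exact ⟨_, hm 0, h0⟩

lemma exists_mem_snd_eq {key : P × P × ℕ → ℕ}
    (hkey : ∀ m m' : P × P × ℕ, m.2.2 < m'.2.2 → key m < key m')
    (hc : MsgChain M i i') (hne : i ≠ i') :
    ∃ m ∈ M, m.2.1 = i' ∧ MsgChain (M.filter (key · ≤ key m)) i i' := by
  -- `m` is the last message of the chain
  rcases hc with h' | ⟨ℓ, j, t, hℓ, h0, hl, hs, hm⟩
  · exact absurd h' hne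
  obtain ⟨ℓ, rfl⟩ := Nat.exists_eq_succ_of_ne_zero hℓ.ne'
  refine ⟨_, hm (Fin.last ℓ), by rw [Fin.succ_last, hl], Or.inr ⟨ℓ + 1, j, t, hℓ, h0, hl, hs,
    fun k => Finset.mem_filter.mpr ⟨hm k, ?_⟩⟩⟩
  rcases (hs.monotone (Fin.le_last k)).lt_or_eq with h | h
  · exact (hkey _ _ h).le
  · rw [hs.injective h]

end MsgChain

section Completion

variable {P : Type*} (M : Finset (P × P × ℕ)) (key : P × P × ℕ → ℕ)

def HearsFromAll (i : P) : Prop := ∀ j, j ≠ i → MsgChain M j i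

noncomputable def completionKey (i : P) : ℕ :=
  sInf {K | HearsFromAll (M.filter (key · ≤ K)) i}

variable {M key}

lemma hearsFromAll_filter_completionKey {i : P} (hi : HearsFromAll M i) :
    HearsFromAll (M.filter (key · ≤ completionKey M key i)) i := by
  refine Nat.sInf_mem (s := {K | HearsFromAll (M.filter (key · ≤ K)) i}) ⟨M.sup key, ?_⟩
  rwa [Set.mem_ofPred_eq, Finset.filter_true_of_mem fun m hm => Finset.le_sup hm]

lemma exists_mem_key_eq_completionKey [Nontrivial P]
    (hkey : ∀ m m' : P × P × ℕ, m.2.2 < m'.2.2 → key m < key m') {i : P}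
    (hi : HearsFromAll M i) :
    ∃ m ∈ M, key m = completionKey M key i ∧ m.2.1 = i := by
  set K := completionKey M key i
  have hlate : ∃ j, j ≠ i ∧ ¬ MsgChain (M.filter (key · < K)) j i := by
    by_contra! hearly
    rcases K.eq_zero_or_pos with hK | hK
    · obtain ⟨j, hj⟩ := exists_ne i
      obtain ⟨m, hm, -⟩ := (hearly j hj).exists_mem_fst_eq hj
      simp [hK] at hm
    · refine Nat.notMem_of_lt_sInf (Nat.sub_lt hK one_pos) fun j hj => (hearly j hj).mono ?_
      exact Finset.monotone_filter_right _ fun _ _ => Nat.le_sub_one_of_lt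
  obtain ⟨j, hj, hnot⟩ := hlate
  obtain ⟨m, hm, hrecv, hchain⟩ :=
    (hearsFromAll_filter_completionKey hi j hj).exists_mem_snd_eq hkey hj
  obtain ⟨hmM, hmK⟩ := Finset.mem_filter.mp hm
  refine ⟨m, hmM, hmK.antisymm (not_lt.mp fun hlt => hnot (hchain.mono ?_)), hrecv⟩
  intro m' hm'
  simp only [Finset.mem_filter] at hm' ⊢
  exact ⟨hm'.1.1, hm'.2.trans_lt hlt⟩

end Completion

lemma card_sub_one_le_card_of_forall_ne {P α : Type*} [Fintype P] (s : Finset α) (g : α → P)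
    (a : P) (h : ∀ x, x ≠ a → ∃ m ∈ s, g m = x) : Fintype.card P - 1 ≤ s.card := by
  rw [← Finset.card_univ, ← Finset.card_erase_of_mem (Finset.mem_univ a)]
  refine Finset.card_le_card_of_surjOn g fun x hx => ?_
  obtain ⟨m, hm, rfl⟩ := h x (Finset.ne_of_mem_erase hx)
  exact ⟨m, hm, rfl⟩

lemma two_mul_card_sub_two_le_card_of_key {P : Type*} [Fintype P] {M : Finset (P × P × ℕ)}
    {key : P × P × ℕ → ℕ} (hinj : Function.Injective key)
    (hkey : ∀ m m' : P × P × ℕ, m.2.2 < m'.2.2 → key m < key m')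
    (hall : ∀ i, HearsFromAll M i) :
    2 * Fintype.card P - 2 ≤ M.card := by
  rcases subsingleton_or_nontrivial P with hP | hP
  · have := Fintype.card_le_one_iff_subsingleton.mpr hP
    omega
  obtain ⟨a, -, hmin⟩ :=
    Finset.exists_min_image Finset.univ (completionKey M key) Finset.univ_nonempty
  set B := M.filter (key · ≤ completionKey M key a)
  have hsend : Fintype.card P - 1 ≤ B.card :=
    card_sub_one_le_card_of_forall_ne B Prod.fst a fun x hx =>
      (hearsFromAll_filter_completionKey (hall a) x hx).exists_mem_fst_eq hx
  have hrecv : Fintype.card P - 1 ≤ (M \ B).card := by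
    refine card_sub_one_le_card_of_forall_ne _ (·.2.1) a fun x hx => ?_
    obtain ⟨m, hm, hmx, rfl⟩ := exists_mem_key_eq_completionKey hkey (hall x)
    obtain ⟨ma, -, hma, rfl⟩ := exists_mem_key_eq_completionKey hkey (hall a)
    refine ⟨m, Finset.mem_sdiff.mpr ⟨hm, fun hB => ?_⟩, rfl⟩
    have hmB := (Finset.mem_filter.mp hB).2
    have hle := hmin m.2.1 (Finset.mem_univ _)
    have hne : key m ≠ key ma := fun h => hx (by rw [hinj h])
    omega
  have hsplit : (M \ B).card + B.card = M.card :=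
    Finset.card_sdiff_add_card_eq_card (Finset.filter_subset _ M)
  omega

theorem two_mul_card_sub_two_le_card {P : Type*} [Fintype P] {M : Finset (P × P × ℕ)}
    (hall : ∀ j i : P, j ≠ i → MsgChain M j i) :
    2 * Fintype.card P - 2 ≤ M.card :=
  let ⟨_, hinj, hkey⟩ := exists_injective_key_strictMono_time P
  two_mul_card_sub_two_le_card_of_key hinj hkey fun i j => hall j i

theorem silence_necessary_general {P : Type*} [Fintype P]
    (f : ℕ)
    (hfn : f < Fintype.card P - 1)
    (M : Finset (P × P × ℕ))
    (hall : ∀ j i : P, j ≠ i → MsgChain M j i) :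
    2 * Fintype.card P - 2 ≤ M.card ∧
      Fintype.card P + f - 1 < 2 * Fintype.card P - 2 :=
  ⟨two_mul_card_sub_two_le_card hall, by omega⟩

/-- Necessity of silence for message optimality: if in a nice run `r` of an AC
protocol for `γ^f` with `f < n - 1` every process has a message chain to every
other process (no information is conveyed by silence), then at least
`2n - 2` messages are sent in `r`, and `2n - 2 > n + f - 1`. Hence a protocol
sending only `n + f - 1` messages in nice runs must use silence. -/
theorem silence_necessary {P : Type*} [Fintype P] [DecidableEq P]
    (f : ℕ) (hf : 1 ≤ f) (hn : 2 < Fintype.card P)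
    (hfn : f < Fintype.card P - 1)
    (M : Finset (P × P × ℕ)) (hM : ∀ m ∈ M, m.1 ≠ m.2.1)
    (hall : ∀ j i : P, j ≠ i → MsgChain M j i) :
    2 * Fintype.card P - 2 ≤ M.card ∧
      Fintype.card P + f - 1 < 2 * Fintype.card P - 2 :=
  silence_necessary_general f hfn M hall
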